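/- Let k ⊆ K be a separable field extension of characteristic p > 0 and let A ⊆ K be a subset that is p-independent over k. Then the extension k(A) ⊆ K is separable. -/

import Mathlib

/-!
Choose a `k^p`-basis `B` of `k` and let `R` be the set of monomials in `A` whose exponents are
all `< p`. Adjoining the elements of `A` one at a time to `K^p k`, `p`-independence makes every
step an extension of degree `p` with basis `1, a, …, a^(p-1)`, so `R` is linearly independent
over `K^p k`; separability of `k` keeps `B` independent over `K^p`, hence the products `B ⋅ R`
are independent over `K^p`. They also span `k(A)` over `k(A)^p`: as `k(A)` is algebraic over
`k(A)^p`, it is the `k(A)^p`-algebra generated by `k ∪ A`, and every monomial in `A` is an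
element of `R` times a `p`-th power. A basis of `k(A)` over `k(A)^p` that stays independent
over `K^p` witnesses linear disjointness.
-/

/-- Subfields `L` and `M` of an ambient field are linearly disjoint over a common
subfield `F` if every finite tuple of elements of `L` that is linearly independent
over `F` remains linearly independent over `M`. -/
def LinDisj {K : Type*} [Field K] (F L M : Subfield K) : Prop :=
  ∀ (n : ℕ) (a : Fin n → K), (∀ i, a i ∈ L) →
    LinearIndependent ↥F a → LinearIndependent ↥M a

/-- The extension `F ⊆ K` (of characteristic `p`) is separable if `F` is linearly
disjoint from `K^p` over `F^p`. -/
def SepExt {K : Type*} [Field K] (p : ℕ) [Fact p.Prime] [CharP K p]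
    (F : Subfield K) : Prop :=
  LinDisj (F.map (frobenius K p)) F ((⊤ : Subfield K).map (frobenius K p))

section

variable {K : Type*} [Field K]

theorem LinDisj.linearIndependent {F L M : Subfield K} (h : LinDisj F L M) {ι : Type*}
    {v : ι → K} (hvL : ∀ i, v i ∈ L) (hv : LinearIndependent F v) :
    LinearIndependent M v := by
  refine linearIndependent_iff_finset_linearIndependent.2 fun s => ?_
  rw [← linearIndependent_equiv s.equivFin.symm]
  exact h _ _ (fun _ => hvL _)
    ((hv.comp _ Subtype.val_injective).comp _ s.equivFin.symm.injective)

theorem linDisj_of_linearIndependent_of_subset_span {F L M : Subfield K} (hFL : F ≤ L)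
    (hFM : F ≤ M) {ι : Type*} (v : ι → K) (hvL : ∀ i, v i ∈ L)
    (hv : LinearIndependent M v) (hspan : (L : Set K) ⊆ Submodule.span F (Set.range v)) :
    LinDisj F L M := by
  intro n x hxL hx
  let Li : IntermediateField F K := L.toIntermediateField fun c => hFL c.2
  let Mi : IntermediateField F K := M.toIntermediateField fun c => hFM c.2
  let w : ι → Li := fun i => ⟨v i, hvL i⟩
  have hvMi : LinearIndependent Mi (Li.val ∘ w) := hv
  have hvF : LinearIndependent F v := by
    have : FaithfulSMul F Mi :=
      (faithfulSMul_iff_algebraMap_injective F Mi).2 (algebraMap F Mi).injective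
    exact hvMi.restrict_scalars' F
  have hw : LinearIndependent F w := LinearIndependent.of_comp Li.val.toLinearMap hvF
  have hwspan : ⊤ ≤ Submodule.span F (Set.range w) := by
    rintro y -
    have hmap : Submodule.span F (Set.range v) =
        (Submodule.span F (Set.range w)).map Li.val.toLinearMap := by
      rw [Submodule.map_span, ← Set.range_comp]
      rfl
    obtain ⟨z, hz, hzy⟩ := (hmap ▸ hspan y.2 : (y : K) ∈ _)
    rwa [← Subtype.ext hzy]
  have H : Mi.LinearDisjoint Li :=
    .of_basis_right (Module.Basis.mk hw hwspan) (by rwa [Module.Basis.coe_mk])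
  exact H.linearIndependent_right (b := fun i => ⟨x i, hxL i⟩)
    (LinearIndependent.of_comp Li.val.toLinearMap hx)

theorem LinearIndependent.mul_of_le {M N : Subfield K} (hMN : M ≤ N) {ι κ : Type*}
    {u : ι → K} (hu : LinearIndependent M u) (huN : ∀ i, u i ∈ N) {w : κ → K}
    (hw : LinearIndependent N w) : LinearIndependent M fun q : ι × κ => u q.1 * w q.2 := by
  let Ni : IntermediateField M K := N.toIntermediateField fun c => hMN c.2
  have hu' : LinearIndependent M fun i => (⟨u i, huN i⟩ : Ni) :=
    LinearIndependent.of_comp Ni.val.toLinearMap hu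
  exact (linearIndependent_smul hu' (show LinearIndependent Ni w from hw) :)

theorem Subfield.span_subset_span_of_le {M N : Subfield K} (hMN : M ≤ N) (s : Set K) :
    (Submodule.span M s : Set K) ⊆ Submodule.span N s := by
  intro x hx
  induction hx using Submodule.span_induction with
  | mem x hx => exact Submodule.subset_span hx
  | zero => exact zero_mem _
  | add x y _ _ hx hy => exact add_mem hx hy
  | smul r x _ hx => exact Submodule.smul_mem _ (⟨r, hMN r.2⟩ : N) hx

noncomputable def monomial (A : Set K) (ν : A →₀ ℕ) : K := ν.prod fun a n => (a : K) ^ n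

section monomial

variable {A : Set K}

theorem monomial_zero : monomial A 0 = 1 := Finsupp.prod_zero_index

theorem monomial_add (μ ν : A →₀ ℕ) :
    monomial A (μ + ν) = monomial A μ * monomial A ν :=
  Finsupp.prod_add_index' (fun _ => pow_zero _) fun _ => pow_add _

theorem monomial_nsmul (n : ℕ) (ν : A →₀ ℕ) :
    monomial A (n • ν) = monomial A ν ^ n := by
  induction n with
  | zero => rw [zero_smul, monomial_zero, pow_zero]
  | succ n ih => rw [succ_nsmul, monomial_add, ih, pow_succ]

theorem monomial_eq_erase_mul (ν : A →₀ ℕ) (a : A) :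
    monomial A ν = monomial A (ν.erase a) * (a : K) ^ ν a :=
  (Finsupp.mul_prod_erase' ν a _ fun _ => pow_zero _).symm.trans (mul_comm _ _)

theorem monomial_mem {L : Subfield K} {ν : A →₀ ℕ}
    (h : ∀ a ∈ ν.support, (a : K) ∈ L) : monomial A ν ∈ L :=
  prod_mem fun a ha => pow_mem (h a ha) _

end monomial

section CharP

variable (p : ℕ) [Fact p.Prime] [CharP K p]

theorem linearIndependent_pow_of_notMem {E : Subfield K} {a : K} (ha : a ∉ E)
    (hap : a ^ p ∈ E) : LinearIndependent E fun i : Fin p => a ^ (i : ℕ) := by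
  have hp : p.Prime := Fact.out
  have hirr : Irreducible (Polynomial.X ^ p - Polynomial.C (⟨a ^ p, hap⟩ : E)) := by
    refine X_pow_sub_C_irreducible_of_prime hp fun b hb => ha ?_
    have : (b : K) ^ p = a ^ p := congrArg Subtype.val hb
    exact frobenius_inj K p this ▸ b.2
  have hmin : minpoly E a = Polynomial.X ^ p - Polynomial.C ⟨a ^ p, hap⟩ :=
    (minpoly.eq_of_irreducible_of_monic hirr
      (by simp only [map_sub, map_pow, Polynomial.aeval_X, Polynomial.aeval_C]; exact sub_self _)
      (Polynomial.monic_X_pow_sub_C _ hp.ne_zero)).symm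
  have := linearIndependent_pow (K := E) a
  rwa [hmin, Polynomial.natDegree_X_pow_sub_C] at this

theorem linearIndepOn_monomial_of_support_subset (N : Subfield K) (hN : ∀ x : K, x ^ p ∈ N)
    {A : Set K} (hA : ∀ a ∈ A, a ∉ N ⊔ Subfield.closure (A \ {a})) (s : Finset A) :
    LinearIndepOn N (monomial A) {ν | ν.support ⊆ s ∧ ∀ a, ν a < p} := by
  classical
  induction s using Finset.induction_on with
  | empty =>
    refine ((linearIndepOn_singleton_iff N (i := (0 : A →₀ ℕ))).2
      (by simp [monomial_zero])).mono fun ν hν => ?_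
    simpa [Finsupp.support_eq_empty] using hν.1
  | insert a s has ih =>
    let E := N ⊔ Subfield.closure (A \ {(a : K)})
    have hpow := linearIndependent_pow_of_notMem p (hA a a.2) (le_sup_left (a := N) (hN a))
    have hmemE (μ : {ν : A →₀ ℕ | ν.support ⊆ s ∧ ∀ a, ν a < p}) :
        monomial A μ ∈ E := by
      refine monomial_mem fun b hb => le_sup_right (a := N) (Subfield.subset_closure ⟨b.2, ?_⟩)
      exact fun h => has (Subtype.ext h ▸ μ.2.1 hb)
    have hprod := ih.linearIndependent.mul_of_le le_sup_left hmemE hpow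
    have herase (ν : {ν : A →₀ ℕ | ν.support ⊆ insert a s ∧ ∀ a, ν a < p}) :
        ν.1.erase a ∈ {ν : A →₀ ℕ | ν.support ⊆ s ∧ ∀ a, ν a < p} := by
      refine ⟨fun b hb => ?_, fun b => ?_⟩
      · rw [Finsupp.support_erase] at hb
        exact (Finset.mem_insert.1 (ν.2.1 (Finset.mem_of_mem_erase hb))).resolve_left
          (Finset.ne_of_mem_erase hb)
      · rw [Finsupp.erase_apply]
        split_ifs
        exacts [Fact.out (p := p.Prime) |>.pos, ν.2.2 b]
    let φ (ν : {ν : A →₀ ℕ | ν.support ⊆ insert a s ∧ ∀ a, ν a < p}) :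
        {ν : A →₀ ℕ | ν.support ⊆ s ∧ ∀ a, ν a < p} × Fin p :=
      (⟨ν.1.erase a, herase ν⟩, ⟨ν.1 a, ν.2.2 a⟩)
    have hcomp : (fun q => monomial A q.1 * (a : K) ^ (q.2 : ℕ)) ∘ φ =
        fun ν => monomial A ν.1 :=
      funext fun ν => (monomial_eq_erase_mul ν.1 a).symm
    rw [LinearIndepOn, ← hcomp]
    refine hprod.comp φ fun ν ν' h => Subtype.ext ?_
    obtain ⟨h₁, h₂⟩ := Prod.ext_iff.1 h
    rw [← Finsupp.erase_add_single a ν.1, ← Finsupp.erase_add_single a ν'.1]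
    exact congrArg₂ (fun μ n => μ + Finsupp.single a n) (congrArg Subtype.val h₁)
      (Fin.val_eq_of_eq h₂)

theorem linearIndepOn_monomial (N : Subfield K) (hN : ∀ x : K, x ^ p ∈ N) {A : Set K}
    (hA : ∀ a ∈ A, a ∉ N ⊔ Subfield.closure (A \ {a})) :
    LinearIndepOn N (monomial A) {ν | ∀ a, ν a < p} := by
  classical
  have hdir : Directed (· ⊆ ·) fun s : Finset A =>
      {ν : A →₀ ℕ | ν.support ⊆ s ∧ ∀ a, ν a < p} :=
    fun s t => ⟨s ∪ t, fun ν hν => ⟨hν.1.trans Finset.subset_union_left, hν.2⟩,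
      fun ν hν => ⟨hν.1.trans Finset.subset_union_right, hν.2⟩⟩
  refine (linearIndepOn_iUnion_of_directed hdir
    (linearIndepOn_monomial_of_support_subset p N hN hA)).mono fun ν hν => ?_
  exact Set.mem_iUnion.2 ⟨ν.support, subset_rfl, hν⟩

theorem Subfield.closure_subset_span_submonoidClosure {F : Subfield K} {S : Set K}
    (hS : S ⊆ F) : (Subfield.closure S : Set K) ⊆
      Submodule.span (F.map (frobenius K p)) (Submonoid.closure S : Set K) := by
  let Fp := F.map (frobenius K p)
  have halg (x : K) (hx : x ∈ S) : IsAlgebraic Fp x :=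
    (IsIntegral.of_pow (Fact.out : p.Prime).pos
      (isIntegral_algebraMap (R := Fp) (x := ⟨x ^ p, x, hS hx, rfl⟩))).isAlgebraic
  rw [← Algebra.adjoin_eq_span, ← IntermediateField.adjoin_toSubalgebra_of_isAlgebraic halg]
  exact Subfield.closure_le (t := (IntermediateField.adjoin Fp S).toSubfield).2
    (IntermediateField.subset_adjoin Fp S)

theorem mul_monomial_mem_span {k F : Subfield K} (hkF : k ≤ F) {A : Set K} (hAF : A ⊆ F)
    {B : Set K} (hB : (k : Set K) ⊆ Submodule.span (k.map (frobenius K p)) B) {c : K}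
    (hc : c ∈ k) (ν : A →₀ ℕ) :
    c * monomial A ν ∈ Submodule.span (F.map (frobenius K p))
      (Set.range fun q : B × {ν : A →₀ ℕ | ∀ a, ν a < p} => q.1 * monomial A q.2) := by
  let ρ : A →₀ ℕ := ν.mapRange (· % p) (Nat.zero_mod p)
  let δ : A →₀ ℕ := ν.mapRange (· / p) (Nat.zero_div p)
  have hν : ν = ρ + p • δ := by
    ext a
    exact (Nat.mod_add_div (ν a) p).symm
  have hδ : monomial A δ ^ p ∈ F.map (frobenius K p) :=
    ⟨monomial A δ, monomial_mem fun a _ => hAF a.2, rfl⟩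
  have hcρ : c * monomial A ρ ∈ Submodule.span (F.map (frobenius K p))
      (Set.range fun q : B × {ν : A →₀ ℕ | ∀ a, ν a < p} => q.1 * monomial A q.2) := by
    have hkpFp : k.map (frobenius K p) ≤ F.map (frobenius K p) := Set.image_mono hkF
    have hcB := Subfield.span_subset_span_of_le hkpFp B (hB hc)
    have := Submodule.mem_map_of_mem
      (f := LinearMap.mulRight (F.map (frobenius K p)) (monomial A ρ)) hcB
    rw [Submodule.map_span] at this
    refine Submodule.span_mono ?_ this
    rintro _ ⟨b, hb, rfl⟩
    exact ⟨(⟨b, hb⟩, ⟨ρ, fun a => Nat.mod_lt _ (Fact.out : p.Prime).pos⟩), rfl⟩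
  rw [hν, monomial_add, monomial_nsmul, ← mul_assoc, mul_comm]
  exact Submodule.smul_mem _ (⟨_, hδ⟩ : F.map (frobenius K p)) hcρ

theorem sup_closure_subset_span {k : Subfield K} {A B : Set K}
    (hB : (k : Set K) ⊆ Submodule.span (k.map (frobenius K p)) B) :
    ((k ⊔ Subfield.closure A : Subfield K) : Set K) ⊆
      Submodule.span ((k ⊔ Subfield.closure A).map (frobenius K p))
        (Set.range fun q : B × {ν : A →₀ ℕ | ∀ a, ν a < p} => q.1 * monomial A q.2) := by
  have hkF : k ≤ k ⊔ Subfield.closure A := le_sup_left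
  have hAF : A ⊆ (k ⊔ Subfield.closure A : Subfield K) :=
    fun _ ha => (le_sup_right : Subfield.closure A ≤ _) (Subfield.subset_closure ha)
  have hF : k ⊔ Subfield.closure A = Subfield.closure (k ∪ A) := by
    rw [Subfield.closure_union, Subfield.closure_eq]
  intro x hx
  rw [SetLike.mem_coe, hF] at hx
  refine Submodule.span_le.2 (fun y hy => ?_)
    (Subfield.closure_subset_span_submonoidClosure p (Set.union_subset hkF hAF) hx)
  rw [SetLike.mem_coe, Submonoid.closure_union, Submonoid.mem_sup] at hy
  obtain ⟨c, hc, z, hz, rfl⟩ := hy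
  replace hc : c ∈ k := Submonoid.closure_le (S := k.toSubmonoid).2 subset_rfl hc
  rw [← Subtype.range_coe (s := A), Submonoid.mem_closure_range_iff] at hz
  obtain ⟨ν, rfl⟩ := hz
  exact mul_monomial_mem_span p hkF hAF hB hc ν

end CharP

end

/-- If `k ⊆ K` is a separable extension of characteristic `p > 0` and `A ⊆ K` is
`p`-independent over `k` (no `a ∈ A` lies in the field generated by `K^p`, `k` and the
remaining elements of `A`), then the extension `k(A) ⊆ K` is separable. -/
theorem sepExt_adjoin_pIndep {K : Type*} [Field K] (p : ℕ) [Fact p.Prime]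
    [CharP K p] (k : Subfield K) (hk : SepExt p k) (A : Set K)
    (hA : ∀ a ∈ A,
      a ∉ (⊤ : Subfield K).map (frobenius K p) ⊔ k ⊔ Subfield.closure (A \ {a})) :
    SepExt p (k ⊔ Subfield.closure A) := by
  set P : Subfield K := (⊤ : Subfield K).map (frobenius K p)
  obtain ⟨B, hBk, hBspan, hBli⟩ := exists_linearIndependent (k.map (frobenius K p)) (k : Set K)
  have hBP : LinearIndependent P ((↑) : B → K) := hk.linearIndependent (fun b => hBk b.2) hBli
  have hR := linearIndepOn_monomial p (P ⊔ k)
    (fun x => le_sup_left (a := P) ⟨x, trivial, rfl⟩) hA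
  have hv := hBP.mul_of_le le_sup_left (fun b => le_sup_right (a := P) (hBk b.2)) hR
  refine linDisj_of_linearIndependent_of_subset_span ?_ (Set.image_mono le_top) _ ?_ hv
    (sup_closure_subset_span p fun x hx => hBspan ▸ Submodule.subset_span hx)
  · rintro _ ⟨x, hx, rfl⟩
    exact pow_mem hx p
  · exact fun q => mul_mem (le_sup_left (a := k) (hBk q.1.2))
      (le_sup_right (a := k) (monomial_mem fun a _ => Subfield.subset_closure a.2))
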